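/- arXiv:2111.10175 — 2 statements merged into one kernel-verified Lean document; each statement's English description precedes it below -/
import Mathlib

section
/- If f is DR-submodular, then for any x ∈ ℤ₊^V and any y ≽ x, f(y) - f(x) ≤ ∑_{e ∈ V} (y_e - x_e) · (f(x + 1_e) - f(x)). -/
lemma dr_aux {V : Type*} [Fintype V] [DecidableEq V] (f : (V → ℤ) → ℝ)
    (hDR : ∀ e : V, ∀ x y : V → ℤ, x ≤ y →
      f (y + Pi.single e 1) - f y ≤ f (x + Pi.single e 1) - f x) :
    ∀ n : ℕ, ∀ x y : V → ℤ, x ≤ y → (∑ e, (y e - x e)).toNat = n →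
      f y - f x ≤ ∑ e, ((y e - x e : ℤ) : ℝ) * (f (x + Pi.single e 1) - f x) := by
  intro n
  induction n with
  | zero =>
    intro x y hxy hsum
    have hnn : ∀ e ∈ Finset.univ, (0:ℤ) ≤ y e - x e := fun e _ => sub_nonneg.2 (hxy e)
    have hsum0 : (∑ e, (y e - x e)) = 0 := by
      have := Finset.sum_nonneg hnn
      omega
    have hz : ∀ e ∈ Finset.univ, y e - x e = 0 :=
      (Finset.sum_eq_zero_iff_of_nonneg hnn).1 hsum0
    have hyx : y = x := funext fun e => by have := hz e (Finset.mem_univ e); omega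
    subst hyx
    simp
  | succ n ih =>
    intro x y hxy hsum
    have hpos : 0 < ∑ e, (y e - x e) := by
      by_contra h
      push_neg at h
      omega
    obtain ⟨e, -, he⟩ := Finset.exists_lt_of_sum_lt (f := fun _ => (0:ℤ))
      (g := fun e => y e - x e) (by simpa using hpos)
    set x' : V → ℤ := x + Pi.single e 1 with hx'
    have hxx' : x ≤ x' := by
      intro e'
      simp only [hx', Pi.add_apply, Pi.single_apply]
      split <;> omega
    have hx'y : x' ≤ y := by
      intro e'
      simp only [hx', Pi.add_apply, Pi.single_apply]
      by_cases h : e' = e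
      · subst h; simp; omega
      · simp [h]; exact hxy e'
    have hsum' : (∑ e', (y e' - x' e')).toNat = n := by
      have h1 : (∑ e', (y e' - x' e')) = (∑ e', (y e' - x e')) - 1 := by
        have h2 : ∀ e' ∈ Finset.univ, y e' - x' e'
            = (y e' - x e') - (Pi.single e 1 : V → ℤ) e' := by
          intro e' _
          simp only [hx', Pi.add_apply]
          ring
        rw [Finset.sum_congr rfl h2, Finset.sum_sub_distrib, Finset.sum_pi_single']
        simp
      omega
    have IH := ih x' y hx'y hsum'
    set Δ : V → ℝ := fun e' => f (x + Pi.single e' 1) - f x with hΔ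
    have hterm : ∀ e' : V,
        ((y e' - x' e' : ℤ) : ℝ) * (f (x' + Pi.single e' 1) - f x')
          ≤ ((y e' - x' e' : ℤ) : ℝ) * Δ e' := by
      intro e'
      apply mul_le_mul_of_nonneg_left (hDR e' x x' hxx')
      exact Int.cast_nonneg (sub_nonneg.2 (hx'y e'))
    have key : (∑ e', ((y e' - x e' : ℤ) : ℝ) * Δ e')
        - (∑ e', ((y e' - x' e' : ℤ) : ℝ) * Δ e') = Δ e := by
      rw [← Finset.sum_sub_distrib]
      have h3 : ∀ e' ∈ Finset.univ,
          ((y e' - x e' : ℤ) : ℝ) * Δ e' - ((y e' - x' e' : ℤ) : ℝ) * Δ e'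
            = (Pi.single e (Δ e) : V → ℝ) e' := by
        intro e' _
        simp only [hx', Pi.add_apply, Pi.single_apply]
        by_cases h : e' = e
        · subst h; simp; push_cast; ring
        · simp [h]
      rw [Finset.sum_congr rfl h3, Finset.sum_pi_single']
      simp
    have h4 : f x' - f x = Δ e := by
      simp only [hΔ, hx']
    calc f y - f x = (f y - f x') + (f x' - f x) := by ring
      _ ≤ (∑ e', ((y e' - x' e' : ℤ) : ℝ) * Δ e') + Δ e := by
            rw [h4]
            exact add_le_add (IH.trans (Finset.sum_le_sum fun e' _ => hterm e')) le_rfl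
      _ = ∑ e', ((y e' - x e' : ℤ) : ℝ) * Δ e' := by linarith [key]

/-- Telescoping DR bound: f(y) - f(x) ≤ ∑ₑ (yₑ - xₑ)·(f(x + 1ₑ) - f(x)) for
x ≼ y. -/
theorem dr_telescoping_bound
    {V : Type*} [Fintype V] [DecidableEq V] (f : (V → ℤ) → ℝ)
    (hDR : ∀ e : V, ∀ x y : V → ℤ, x ≤ y →
      f (y + Pi.single e 1) - f y ≤ f (x + Pi.single e 1) - f x)
    (x y : V → ℤ) (hx : 0 ≤ x) (hxy : x ≤ y) :
    f y - f x ≤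
      ∑ e, ((y e - x e : ℤ) : ℝ) * (f (x + Pi.single e 1) - f x) := by
  exact dr_aux f hDR _ x y hxy rfl
end

section
/- Let f be monotone and DR-submodular, x* an optimal solution with ‖x*‖₁ ≤ r, x a current solution, and suppose for every e in A := supp(max(x* - x, 0)) that f(1_e | x) ≤ M. Then f(x*) - f(x) ≤ r · M. -/
theorem gap_le_r_mul_M_aux
    {V : Type*} [Fintype V] [DecidableEq V] (f : (V → ℤ) → ℝ)
    (hDR : ∀ e : V, ∀ x y : V → ℤ, x ≤ y →
      f (y + Pi.single e 1) - f y ≤ f (x + Pi.single e 1) - f x)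
    (x y : V → ℤ) (M : ℝ)
    (hbound : ∀ e : V, x e < y e → f (x + Pi.single e 1) - f x ≤ M) :
    ∀ n : ℕ, ∀ z : V → ℤ, x ≤ z → z ≤ y →
      (∑ v, (y v - z v)) = (n : ℤ) → f y - f z ≤ (n : ℝ) * M := by
  intro n
  induction n with
  | zero =>
    intro z hxz hzy hsum
    have hzeq : z = y := by
      funext v
      have hnn : ∀ v ∈ Finset.univ, (0 : ℤ) ≤ y v - z v := by
        intro v _
        have h0 : z v ≤ y v := hzy v
        omega
      have := (Finset.sum_eq_zero_iff_of_nonneg hnn).mp (by simpa using hsum) v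
        (Finset.mem_univ v)
      omega
    rw [hzeq]; simp
  | succ n ih =>
    intro z hxz hzy hsum
    have hex : ∃ e : V, z e < y e := by
      by_contra h
      push_neg at h
      have hz : ∑ v, (y v - z v) = 0 := Finset.sum_eq_zero (by
        intro v _
        have h1 : y v ≤ z v := h v
        have h2 : z v ≤ y v := hzy v
        omega)
      rw [hz] at hsum
      omega
    obtain ⟨e, he⟩ := hex
    have hxz' : x ≤ z + Pi.single e 1 := by
      intro v
      rcases eq_or_ne v e with rfl | hne
      · have h0 : x v ≤ z v := hxz v
        have h1 : z v ≤ y v := hzy v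
        show x v ≤ z v + (Pi.single v (1:ℤ) : V → ℤ) v
        simp only [Pi.single_eq_same]
        omega
      · simpa [Pi.single_eq_of_ne hne] using hxz v
    have hz'y : z + Pi.single e 1 ≤ y := by
      intro v
      rcases eq_or_ne v e with rfl | hne
      · have h1 : z v < y v := he
        show z v + (Pi.single v (1:ℤ) : V → ℤ) v ≤ y v
        simp only [Pi.single_eq_same]
        omega
      · simpa [Pi.single_eq_of_ne hne] using hzy v
    have hsum' : (∑ v, (y v - (z + (Pi.single e (1:ℤ) : V → ℤ)) v)) = (n : ℤ) := by
      have heq : ∑ v, (y v - (z + (Pi.single e (1:ℤ) : V → ℤ)) v)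
          = (∑ v, (y v - z v)) - ∑ v, Pi.single e (1:ℤ) v := by
        rw [← Finset.sum_sub_distrib]
        exact Finset.sum_congr rfl (fun v _ => by show y v - (z v + (Pi.single e (1:ℤ) : V → ℤ) v) = _; ring)
      have hsingle : ∑ v, Pi.single e (1:ℤ) v = 1 := by
        simp [Finset.sum_pi_single']
      rw [heq, hsingle, hsum]
      push_cast
      ring
    have h1 : f y - f (z + Pi.single e 1) ≤ (n : ℝ) * M := ih _ hxz' hz'y hsum'
    have hxe : x e < y e := lt_of_le_of_lt (hxz e) he
    have h2 : f (z + Pi.single e 1) - f z ≤ M :=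
      le_trans (hDR e x z hxz) (hbound e hxe)
    push_cast
    linarith

/-- Bounding the gap to the optimum by r times a bound on the marginal gains
over the support of max(x* - x, 0). -/
theorem gap_le_r_mul_M
    {V : Type*} [Fintype V] [DecidableEq V] (f : (V → ℤ) → ℝ)
    (hmono : ∀ x y : V → ℤ, 0 ≤ x → x ≤ y → f x ≤ f y)
    (hDR : ∀ e : V, ∀ x y : V → ℤ, x ≤ y →
      f (y + Pi.single e 1) - f y ≤ f (x + Pi.single e 1) - f x)
    (r : ℕ) (x xstar : V → ℤ) (hx : 0 ≤ x) (hxstar : 0 ≤ xstar)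
    (hcard : ∑ v, xstar v ≤ (r : ℤ))
    (M : ℝ) (hM : 0 ≤ M)
    (hbound : ∀ e : V, 0 < xstar e - x e →
      f (x + Pi.single e 1) - f x ≤ M) :
    f xstar - f x ≤ (r : ℝ) * M := by
  set y : V → ℤ := x ⊔ xstar with hy
  have hyv : ∀ v, y v = max (x v) (xstar v) := fun v => rfl
  have hysup : ∀ v, y v = x v ∨ y v = xstar v := fun v => by
    rw [hyv]; exact max_choice _ _
  have hxy : ∀ v, x v ≤ y v := fun v => by rw [hyv]; exact le_max_left _ _
  have hsy : ∀ v, xstar v ≤ y v := fun v => by rw [hyv]; exact le_max_right _ _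
  have hbound' : ∀ e : V, x e < y e → f (x + Pi.single e 1) - f x ≤ M := by
    intro e hlt
    apply hbound
    rcases hysup e with h | h <;> omega
  have key := gap_le_r_mul_M_aux f hDR x y M hbound'
  have hnn : (0:ℤ) ≤ ∑ v, (y v - x v) := Finset.sum_nonneg (by
    intro v _; have := hxy v; omega)
  obtain ⟨n, hn⟩ := Int.eq_ofNat_of_zero_le hnn
  have hnr : (n : ℤ) ≤ (r : ℤ) := by
    calc (n : ℤ) = ∑ v, (y v - x v) := hn.symm
      _ ≤ ∑ v, xstar v := by
          apply Finset.sum_le_sum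
          intro v _
          have h3 : (0:ℤ) ≤ x v := hx v
          have h4 : (0:ℤ) ≤ xstar v := hxstar v
          rcases hysup v with h5 | h5 <;> omega
      _ ≤ (r : ℤ) := hcard
  have hnr' : (n : ℝ) ≤ (r : ℝ) := by exact_mod_cast hnr
  have h1 : f y - f x ≤ (n : ℝ) * M := key n x le_rfl (fun v => hxy v) hn
  have h2 : f xstar ≤ f y := hmono xstar y hxstar (fun v => hsy v)
  have h3 : (n : ℝ) * M ≤ (r : ℝ) * M := mul_le_mul_of_nonneg_right hnr' hM
  linarith
end
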